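/- Let (R,m) be a local ring of depth zero that is not artinian, and let Γ_m(R) be the m-torsion submodule of R. Then ⋂_{n>0} ((0 :_R m^n) + m^n) ⊆ Γ_m(R); in particular, this intersection is not an m-primary ideal. -/

import Mathlib

open CategoryTheory IsLocalRing

universe u

variable (R : Type u) [CommRing R]

/-- The submodule of `Hom_R(M,N)` consisting of maps factoring through a projective module. -/
def projStable (M N : Type u) [AddCommGroup M] [Module R M] [AddCommGroup N] [Module R N] :
    Submodule R (M →ₗ[R] N) where
  carrier := {f | ∃ (P : Type u) (_ : AddCommGroup P) (_ : Module R P)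
    (_ : Module.Projective R P) (g : M →ₗ[R] P) (h : P →ₗ[R] N), f = h.comp g}
  zero_mem' := ⟨PUnit, inferInstance, inferInstance, inferInstance, 0, 0, by ext x; simp⟩
  add_mem' := by
    rintro f f' ⟨P, _, _, _, g, h, rfl⟩ ⟨P', _, _, _, g', h', rfl⟩
    exact ⟨P × P', inferInstance, inferInstance, inferInstance, g.prod g',
      h.comp (LinearMap.fst R P P') + h'.comp (LinearMap.snd R P P'), by ext x; simp⟩
  smul_mem' := by
    rintro r f ⟨P, _, _, _, g, h, rfl⟩
    exact ⟨P, inferInstance, inferInstance, inferInstance, g, r • h, by ext x; simp⟩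

/-- The stable hom module `Hom_R(M,N)/P_R(M,N)`. -/
def stableHom (M N : Type u) [AddCommGroup M] [Module R M] [AddCommGroup N] [Module R N] :=
  (M →ₗ[R] N) ⧸ projStable R M N

noncomputable instance (M N : Type u) [AddCommGroup M] [Module R M] [AddCommGroup N]
    [Module R N] : AddCommGroup (stableHom R M N) :=
  inferInstanceAs (AddCommGroup ((M →ₗ[R] N) ⧸ projStable R M N))

noncomputable instance (M N : Type u) [AddCommGroup M] [Module R M] [AddCommGroup N]
    [Module R N] : Module R (stableHom R M N) :=
  inferInstanceAs (Module R ((M →ₗ[R] N) ⧸ projStable R M N))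

/-- `Ann(M)`: the annihilator of the stable endomorphism module of `M`. -/
noncomputable def stAnn (M : Type u) [AddCommGroup M] [Module R M] : Ideal R :=
  Module.annihilator R (stableHom R M M)

/-- `Ext_R^n(M,N)` as an `R`-module. -/
noncomputable abbrev ExtM (n : ℕ) (M : ModuleCat.{u} R) (N : ModuleCat.{u} R) :
    ModuleCat.{u} R :=
  ((Ext R (ModuleCat.{u} R) n).obj (Opposite.op M)).obj N

/-- `ca^n(R)`, the `n`-th cohomology annihilator ideal. -/
noncomputable def ca (n : ℕ) : Ideal R :=
  ⨅ (m : ℕ) (_ : n ≤ m) (M : ModuleCat.{u} R) (N : ModuleCat.{u} R)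
    (_ : Module.Finite R M) (_ : Module.Finite R N),
    Module.annihilator R (ExtM R m M N)

/-! Since `Γ_m(R)` is an ideal, Krull's intersection theorem for the finite module `R ⧸ Γ_m(R)`
gives `⋂ₙ (Γ_m(R) + mⁿ) = Γ_m(R)`, and this intersection contains the given one. If the given
intersection were `m`-primary, some `mᵏ` would lie in `Γ_m(R)`, which equals `(0 :_R m^N)` for
some `N` because the chain of annihilators stabilizes; then `m^(k+N) = 0` and `R` is artinian. -/

theorem Submodule.iInf_sup_pow_smul_eq_of_isLocalRing {R M : Type*} [CommRing R]
    [IsNoetherianRing R] [IsLocalRing R] [AddCommGroup M] [Module R M] [Module.Finite R M]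
    {I : Ideal R} (hI : I ≠ ⊤) (N : Submodule R M) :
    ⨅ n : ℕ, (N ⊔ I ^ n • ⊤) = N := by
  have hmap (n : ℕ) :
      (I ^ n • ⊤ : Submodule R (M ⧸ N)) = (I ^ n • ⊤ : Submodule R M).map N.mkQ := by
    rw [Submodule.map_smul'', Submodule.map_top, Submodule.range_mkQ]
  calc ⨅ n : ℕ, (N ⊔ I ^ n • ⊤)
      = (⨅ n : ℕ, (I ^ n • ⊤ : Submodule R (M ⧸ N))).comap N.mkQ := by
        simp only [Submodule.comap_iInf, hmap, Submodule.comap_map_mkQ]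
    _ = N := by
        rw [Ideal.iInf_pow_smul_eq_bot_of_isLocalRing I hI, ← LinearMap.ker, Submodule.ker_mkQ]

theorem Ideal.iInf_sup_pow_eq_of_isLocalRing {R : Type*} [CommRing R] [IsNoetherianRing R]
    [IsLocalRing R] {I : Ideal R} (hI : I ≠ ⊤) (J : Ideal R) : ⨅ n : ℕ, (J ⊔ I ^ n) = J := by
  simpa only [Ideal.smul_eq_mul, Ideal.mul_top] using
    Submodule.iInf_sup_pow_smul_eq_of_isLocalRing hI J

theorem Ideal.exists_iSup_colon_pow_eq {R : Type*} [CommRing R] [IsNoetherianRing R]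
    (I J : Ideal R) : ∃ N : ℕ, ⨆ n : ℕ, J.colon ((I ^ n : Ideal R) : Set R) =
      J.colon ((I ^ N : Ideal R) : Set R) :=
  (IsNoetherian.noetherian _).stabilizes_of_iSup_eq
    ⟨fun n => J.colon ((I ^ n : Ideal R) : Set R),
      fun _ _ h => Submodule.colon_mono le_rfl (Ideal.pow_le_pow_right h)⟩ rfl

theorem Ideal.le_colon_iff_mul_le {R : Type*} [CommRing R] {I J K : Ideal R} :
    K ≤ J.colon (I : Set R) ↔ K * I ≤ J := by
  rw [Ideal.mul_le]
  exact ⟨fun h r hr s hs => Submodule.mem_colon.mp (h hr) s hs,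
    fun h r hr => Submodule.mem_colon.mpr (h r hr)⟩

theorem Ideal.iInf_colon_pow_add_pow_le_iSup_colon_pow {R : Type*} [CommRing R]
    [IsNoetherianRing R] [IsLocalRing R] {I : Ideal R} (hI : I ≠ ⊤) (J : Ideal R) :
    ⨅ (n : ℕ) (_ : 0 < n), (J.colon ((I ^ n : Ideal R) : Set R) + I ^ n) ≤
      ⨆ n : ℕ, J.colon ((I ^ n : Ideal R) : Set R) := by
  set Γ := ⨆ n : ℕ, J.colon ((I ^ n : Ideal R) : Set R)
  have hcolon (n : ℕ) : J.colon ((I ^ n : Ideal R) : Set R) ≤ Γ :=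
    le_iSup (fun n => J.colon ((I ^ n : Ideal R) : Set R)) n
  calc _ ≤ ⨅ n : ℕ, (Γ ⊔ I ^ (n + 1)) :=
        le_iInf fun n => (iInf₂_le (n + 1) n.succ_pos).trans (sup_le_sup_right (hcolon _) _)
    _ ≤ ⨅ n : ℕ, (Γ ⊔ I ^ n) :=
        iInf_mono fun n => sup_le_sup_left (Ideal.pow_le_pow_right n.le_succ) _
    _ = Γ := Ideal.iInf_sup_pow_eq_of_isLocalRing hI Γ

theorem isArtinianRing_of_pow_maximalIdeal_le_iSup_colon {R : Type*} [CommRing R]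
    [IsNoetherianRing R] [IsLocalRing R] {k : ℕ}
    (hk : maximalIdeal R ^ k ≤
      ⨆ n : ℕ, (⊥ : Ideal R).colon ((maximalIdeal R ^ n : Ideal R) : Set R)) :
    IsArtinianRing R := by
  obtain ⟨N, hN⟩ := Ideal.exists_iSup_colon_pow_eq (maximalIdeal R) ⊥
  rw [isArtinianRing_iff_isNilpotent_maximalIdeal]
  refine ⟨k + N, ?_⟩
  rw [pow_add, Ideal.zero_eq_bot, ← le_bot_iff, ← Ideal.le_colon_iff_mul_le, ← hN]
  exact hk

theorem stmt11 [IsNoetherianRing R] [IsLocalRing R]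
    (hart : ¬ IsArtinianRing R) :
    ((⨅ (n : ℕ) (_ : 0 < n),
        ((⊥ : Ideal R).colon (((maximalIdeal R) ^ n : Ideal R) : Set R) + (maximalIdeal R) ^ n))
      ≤ ⨆ n : ℕ, (⊥ : Ideal R).colon (((maximalIdeal R) ^ n : Ideal R) : Set R)) ∧
    (⨅ (n : ℕ) (_ : 0 < n),
        ((⊥ : Ideal R).colon (((maximalIdeal R) ^ n : Ideal R) : Set R) + (maximalIdeal R) ^ n)).radical
      ≠ maximalIdeal R := by
  have hΓ := Ideal.iInf_colon_pow_add_pow_le_iSup_colon_pow (maximalIdeal.isMaximal R).ne_top ⊥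
  refine ⟨hΓ, fun hrad => hart ?_⟩
  obtain ⟨k, hk⟩ := Ideal.exists_pow_le_of_le_radical_of_fg hrad.ge (IsNoetherian.noetherian _)
  exact isArtinianRing_of_pow_maximalIdeal_le_iSup_colon (hk.trans hΓ)
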